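/- Let (X_1,Y_1),…,(X_4,Y_4) be i.i.d. random elements of S^{d1} × S^{d2} with bounded measurable symmetric kernel K on each sphere, and suppose X_1 and Y_1 are independent. Then the second projection of the symmetrized kernel Φ̃ is given, for all (x_1,y_1),(x_2,y_2) ∈ S^{d1} × S^{d2}, by φ_2((x_1,y_1),(x_2,y_2)) = (1/6)[ EK(x_2,X_3)·EK(y_2,Y_3) + EK(x_1,X_3)·EK(y_1,Y_3) + EK(x_1,X_3)·EK(y_2,Y_3) + EK(x_2,X_3)·EK(y_1,Y_3) + EK(X_3,X_4)·EK(Y_3,Y_4) + K(x_1,x_2)K(y_1,y_2) + K(x_1,x_2)·EK(Y_3,Y_4) + K(y_1,y_2)·EK(X_3,X_4) − K(x_1,x_2)·EK(y_1,Y_3) − K(x_1,x_2)·EK(y_2,Y_3) − K(y_1,y_2)·EK(x_1,X_3) − K(y_1,y_2)·EK(x_2,X_3) − EK(X_3,x_1)·EK(Y_3,Y_4) − EK(X_3,x_2)·EK(Y_3,Y_4) − EK(X_3,X_4)·EK(Y_4,y_1) − EK(X_3,X_4)·EK(Y_3,y_2) ]. -/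
import Mathlib


open MeasureTheory ProbabilityTheory Filter Topology

noncomputable section

/-- The unit sphere `S^d = {x ∈ ℝ^{d+1} : ‖x‖ = 1}` with the Euclidean norm. -/
abbrev UnitSphere (d : ℕ) : Type :=
  Metric.sphere (0 : EuclideanSpace ℝ (Fin (d + 1))) 1

/-- The kernel `Φ` of the V-statistic of order 4. -/
def PhiKer {α β : Type*} (K1 : α → α → ℝ) (K2 : β → β → ℝ)
    (z1 z2 z3 z4 : α × β) : ℝ :=
  K1 z1.1 z2.1 * K2 z1.2 z2.2 + K1 z1.1 z2.1 * K2 z3.2 z4.2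
    - 2 * (K1 z1.1 z2.1 * K2 z1.2 z3.2)

/-- The symmetrization `Φ̃` of `Φ` over its four arguments. -/
def PhiSym {α β : Type*} (K1 : α → α → ℝ) (K2 : β → β → ℝ)
    (z : Fin 4 → α × β) : ℝ :=
  (1 / 24 : ℝ) *
    ∑ σ : Equiv.Perm (Fin 4), PhiKer K1 K2 (z (σ 0)) (z (σ 1)) (z (σ 2)) (z (σ 3))

/-- The second projection of the symmetrized kernel `Φ̃`:
`φ₂(z₁,z₂) = E[Φ̃(z₁,z₂,(X₃,Y₃),(X₄,Y₄))]` where `(X₃,Y₃),(X₄,Y₄)` are independent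
copies with joint law `μ`. -/
def phi2 {α β : Type*} [MeasurableSpace α] [MeasurableSpace β]
    (K1 : α → α → ℝ) (K2 : β → β → ℝ) (μ : Measure (α × β)) (z1 z2 : α × β) : ℝ :=
  ∫ z3, (∫ z4, PhiSym K1 K2 ![z1, z2, z3, z4] ∂μ) ∂μ

/- ### Auxiliary lemmas -/

lemma d4_1 (p : Fin 4) (e : Equiv.Perm (Fin 3)) :
    Equiv.Perm.decomposeFin.symm (p, e) 1 = Equiv.swap 0 p ((e 0).succ) := by
  rw [show (1 : Fin 4) = Fin.succ 0 from rfl, Equiv.Perm.decomposeFin_symm_apply_succ]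
lemma d4_2 (p : Fin 4) (e : Equiv.Perm (Fin 3)) :
    Equiv.Perm.decomposeFin.symm (p, e) 2 = Equiv.swap 0 p ((e 1).succ) := by
  rw [show (2 : Fin 4) = Fin.succ 1 from rfl, Equiv.Perm.decomposeFin_symm_apply_succ]
lemma d4_3 (p : Fin 4) (e : Equiv.Perm (Fin 3)) :
    Equiv.Perm.decomposeFin.symm (p, e) 3 = Equiv.swap 0 p ((e 2).succ) := by
  rw [show (3 : Fin 4) = Fin.succ 2 from rfl, Equiv.Perm.decomposeFin_symm_apply_succ]
lemma d3_1 (p : Fin 3) (e : Equiv.Perm (Fin 2)) :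
    Equiv.Perm.decomposeFin.symm (p, e) 1 = Equiv.swap 0 p ((e 0).succ) := by
  rw [show (1 : Fin 3) = Fin.succ 0 from rfl, Equiv.Perm.decomposeFin_symm_apply_succ]
lemma d3_2 (p : Fin 3) (e : Equiv.Perm (Fin 2)) :
    Equiv.Perm.decomposeFin.symm (p, e) 2 = Equiv.swap 0 p ((e 1).succ) := by
  rw [show (2 : Fin 3) = Fin.succ 1 from rfl, Equiv.Perm.decomposeFin_symm_apply_succ]
lemma d2_1 (p : Fin 2) (e : Equiv.Perm (Fin 1)) :
    Equiv.Perm.decomposeFin.symm (p, e) 1 = Equiv.swap 0 p ((e 0).succ) := by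
  rw [show (1 : Fin 2) = Fin.succ 0 from rfl, Equiv.Perm.decomposeFin_symm_apply_succ]
lemma permfin1 (e : Equiv.Perm (Fin 1)) (x : Fin 1) : e x = 0 := Subsingleton.elim _ _
lemma s1_0 : (0 : Fin 1).succ = 1 := rfl
lemma s2_0 : (0 : Fin 2).succ = 1 := rfl
lemma s2_1 : (1 : Fin 2).succ = 2 := rfl
lemma s3_0 : (0 : Fin 3).succ = 1 := rfl
lemma s3_1 : (1 : Fin 3).succ = 2 := rfl
lemma s3_2 : (2 : Fin 3).succ = 3 := rfl

/-- Expansion of a sum over all permutations of `Fin 4`. -/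
lemma sum_perm_fin4 {M : Type*} [AddCommMonoid M] (f : Fin 4 → Fin 4 → Fin 4 → Fin 4 → M) :
    ∑ σ : Equiv.Perm (Fin 4), f (σ 0) (σ 1) (σ 2) (σ 3) =
      f 0 1 2 3 + f 0 1 3 2 + f 0 2 1 3 + f 0 2 3 1 + f 0 3 2 1 + f 0 3 1 2 +
      f 1 0 2 3 + f 1 0 3 2 + f 1 2 0 3 + f 1 2 3 0 + f 1 3 2 0 + f 1 3 0 2 +
      f 2 1 0 3 + f 2 1 3 0 + f 2 0 1 3 + f 2 0 3 1 + f 2 3 0 1 + f 2 3 1 0 +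
      f 3 1 2 0 + f 3 1 0 2 + f 3 2 1 0 + f 3 2 0 1 + f 3 0 2 1 + f 3 0 1 2 := by
  rw [← Equiv.sum_comp (Equiv.Perm.decomposeFin (n:=3)).symm, Fintype.sum_prod_type]
  simp only [← Equiv.sum_comp (Equiv.Perm.decomposeFin (n:=2)).symm, Fintype.sum_prod_type]
  simp only [← Equiv.sum_comp (Equiv.Perm.decomposeFin (n:=1)).symm, Fintype.sum_prod_type]
  simp only [Fintype.sum_unique, Fin.sum_univ_four, Fin.sum_univ_three, Fin.sum_univ_two]
  simp only [Equiv.Perm.decomposeFin_symm_apply_zero, d4_1, d4_2, d4_3, d3_1, d3_2, d2_1, permfin1]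
  simp (config := { decide := true }) only [s1_0, s2_0, s2_1, s3_0, s3_1, s3_2,
    Equiv.swap_apply_def, if_true, if_false]
  abel

/-- Expectation of a kernel evaluated at two "positions" that are either deterministic
(`some a`) or to be integrated out (`none`). -/
def optE {γ : Type*} (K : γ → γ → ℝ) (I : γ → ℝ) (m : ℝ) : Option γ → Option γ → ℝ
  | some a, some b => K a b
  | some a, none => I a
  | none, some b => I b
  | none, none => m

lemma integrable_of_bdd {γ : Type*} [MeasurableSpace γ] {m : Measure γ} [IsFiniteMeasure m]
    {f : γ → ℝ} (hf : AEStronglyMeasurable f m) {C : ℝ} (hC : ∀ x, |f x| ≤ C) :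
    Integrable f m :=
  ⟨hf, HasFiniteIntegral.of_bounded (C := C)
    (Eventually.of_forall (by simpa [Real.norm_eq_abs] using hC))⟩


lemma int_split {γ : Type*} [MeasurableSpace γ] {m : MeasureTheory.Measure γ} {A B C : γ → ℝ}
    (hA : Integrable A m) (hB : Integrable B m) (hC : Integrable C m) :
    ∫ x, (A x + B x - 2 * C x) ∂m = (∫ x, A x ∂m) + (∫ x, B x ∂m) - 2 * ∫ x, C x ∂m := by
  have h : ∫ x, (A x + B x - 2 * C x) ∂m = ∫ x, (A x + B x) ∂m - ∫ x, 2 * C x ∂m :=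
    integral_sub (hA.add hB) (hC.const_mul 2)
  rw [h, integral_add hA hB, integral_const_mul]

set_option maxHeartbeats 8000000 in
/-- For i.i.d. random elements `(X_i,Y_i)` of `S^{d1} × S^{d2}` with bounded measurable
symmetric kernels and independent `X`, `Y`, the second projection of the symmetrized
kernel `Φ̃` is given by the stated 16-term formula. -/
theorem secondProjection_formula
    (d1 d2 : ℕ) (hd1 : 1 ≤ d1) (hd2 : 1 ≤ d2)
    (K1 : UnitSphere d1 → UnitSphere d1 → ℝ) (K2 : UnitSphere d2 → UnitSphere d2 → ℝ)
    (hK1meas : Measurable (Function.uncurry K1)) (hK2meas : Measurable (Function.uncurry K2))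
    (hK1bdd : ∃ C, ∀ x y, |K1 x y| ≤ C) (hK2bdd : ∃ C, ∀ x y, |K2 x y| ≤ C)
    (hK1symm : ∀ x y, K1 x y = K1 y x) (hK2symm : ∀ x y, K2 x y = K2 y x)
    {Ω : Type*} [MeasurableSpace Ω] (P : Measure Ω) [IsProbabilityMeasure P]
    (X : Ω → UnitSphere d1) (Y : Ω → UnitSphere d2)
    (hX : Measurable X) (hY : Measurable Y)
    (hindep : IndepFun X Y P)
    (μ : Measure (UnitSphere d1 × UnitSphere d2))
    (hμ : μ = Measure.map (fun ω => (X ω, Y ω)) P) :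
    ∀ z1 z2 : UnitSphere d1 × UnitSphere d2,
      phi2 K1 K2 μ z1 z2 =
        (1 / 6 : ℝ) *
          ((∫ w, K1 z2.1 w.1 ∂μ) * (∫ w, K2 z2.2 w.2 ∂μ)
            + (∫ w, K1 z1.1 w.1 ∂μ) * (∫ w, K2 z1.2 w.2 ∂μ)
            + (∫ w, K1 z1.1 w.1 ∂μ) * (∫ w, K2 z2.2 w.2 ∂μ)
            + (∫ w, K1 z2.1 w.1 ∂μ) * (∫ w, K2 z1.2 w.2 ∂μ)
            + (∫ w, (∫ v, K1 w.1 v.1 ∂μ) ∂μ) * (∫ w, (∫ v, K2 w.2 v.2 ∂μ) ∂μ)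
            + K1 z1.1 z2.1 * K2 z1.2 z2.2
            + K1 z1.1 z2.1 * (∫ w, (∫ v, K2 w.2 v.2 ∂μ) ∂μ)
            + K2 z1.2 z2.2 * (∫ w, (∫ v, K1 w.1 v.1 ∂μ) ∂μ)
            - K1 z1.1 z2.1 * (∫ w, K2 z1.2 w.2 ∂μ)
            - K1 z1.1 z2.1 * (∫ w, K2 z2.2 w.2 ∂μ)
            - K2 z1.2 z2.2 * (∫ w, K1 z1.1 w.1 ∂μ)
            - K2 z1.2 z2.2 * (∫ w, K1 z2.1 w.1 ∂μ)
            - (∫ w, K1 w.1 z1.1 ∂μ) * (∫ w, (∫ v, K2 w.2 v.2 ∂μ) ∂μ)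
            - (∫ w, K1 w.1 z2.1 ∂μ) * (∫ w, (∫ v, K2 w.2 v.2 ∂μ) ∂μ)
            - (∫ w, (∫ v, K1 w.1 v.1 ∂μ) ∂μ) * (∫ w, K2 w.2 z1.2 ∂μ)
            - (∫ w, (∫ v, K1 w.1 v.1 ∂μ) ∂μ) * (∫ w, K2 w.2 z2.2 ∂μ)) := by
  intro z1 z2
  obtain ⟨C1', hC1'⟩ := hK1bdd
  obtain ⟨C2', hC2'⟩ := hK2bdd
  set C1 := max C1' 0 with hC1def
  set C2 := max C2' 0 with hC2def
  have hC1 : ∀ x y, |K1 x y| ≤ C1 := fun x y => (hC1' x y).trans (le_max_left _ _)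
  have hC2 : ∀ x y, |K2 x y| ≤ C2 := fun x y => (hC2' x y).trans (le_max_left _ _)
  have hC1nn : 0 ≤ C1 := le_max_right _ _
  have hC2nn : 0 ≤ C2 := le_max_right _ _
  set ν1 := P.map X with hν1
  set ν2 := P.map Y with hν2
  haveI : IsProbabilityMeasure ν1 := Measure.isProbabilityMeasure_map hX.aemeasurable
  haveI : IsProbabilityMeasure ν2 := Measure.isProbabilityMeasure_map hY.aemeasurable
  have hμprod : μ = ν1.prod ν2 := by
    rw [hμ, (indepFun_iff_map_prod_eq_prod_map_map hX.aemeasurable hY.aemeasurable).mp hindep]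
  haveI : IsProbabilityMeasure μ := by
    rw [hμprod]; infer_instance
  -- basic integral identities
  have hfst : ∀ f : UnitSphere d1 → ℝ, ∫ w, f w.1 ∂μ = ∫ x, f x ∂ν1 := by
    intro f
    rw [hμprod]
    simpa using integral_prod_mul (μ := ν1) (ν := ν2) f (fun _ => (1 : ℝ))
  have hsnd : ∀ g : UnitSphere d2 → ℝ, ∫ w, g w.2 ∂μ = ∫ y, g y ∂ν2 := by
    intro g
    rw [hμprod]
    simpa using integral_prod_mul (μ := ν1) (ν := ν2) (fun _ => (1 : ℝ)) g
  have hPM : ∀ (f : UnitSphere d1 → ℝ) (g : UnitSphere d2 → ℝ),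
      ∫ w, f w.1 * g w.2 ∂μ = (∫ x, f x ∂ν1) * (∫ y, g y ∂ν2) := by
    intro f g
    rw [hμprod]
    exact integral_prod_mul f g
  have hsy1 : ∀ a, (∫ x, K1 x a ∂ν1) = ∫ x, K1 a x ∂ν1 := fun a =>
    integral_congr_ae (Eventually.of_forall fun x => hK1symm x a)
  have hsy2 : ∀ a, (∫ y, K2 y a ∂ν2) = ∫ y, K2 a y ∂ν2 := fun a =>
    integral_congr_ae (Eventually.of_forall fun y => hK2symm y a)
  -- single-factor integrals over μ
  have i1a : ∀ a, ∫ w : UnitSphere d1 × UnitSphere d2, K1 a w.1 ∂μ = ∫ x, K1 a x ∂ν1 :=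
    fun a => hfst (fun x => K1 a x)
  have i1b : ∀ a, ∫ w : UnitSphere d1 × UnitSphere d2, K1 w.1 a ∂μ = ∫ x, K1 a x ∂ν1 :=
    fun a => (hfst (fun x => K1 x a)).trans (hsy1 a)
  have i2a : ∀ a, ∫ w : UnitSphere d1 × UnitSphere d2, K2 a w.2 ∂μ = ∫ y, K2 a y ∂ν2 :=
    fun a => hsnd (fun y => K2 a y)
  have i2b : ∀ a, ∫ w : UnitSphere d1 × UnitSphere d2, K2 w.2 a ∂μ = ∫ y, K2 a y ∂ν2 :=
    fun a => (hsnd (fun y => K2 y a)).trans (hsy2 a)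
  have iE1 : ∫ w : UnitSphere d1 × UnitSphere d2, (∫ x, K1 w.1 x ∂ν1) ∂μ
      = ∫ x, ∫ y, K1 x y ∂ν1 ∂ν1 := hfst (fun a => ∫ x, K1 a x ∂ν1)
  have iE2 : ∫ w : UnitSphere d1 × UnitSphere d2, (∫ y, K2 w.2 y ∂ν2) ∂μ
      = ∫ x, ∫ y, K2 x y ∂ν2 ∂ν2 := hsnd (fun a => ∫ y, K2 a y ∂ν2)
  -- product integrals over μ
  have p11 : ∀ a b, ∫ w : UnitSphere d1 × UnitSphere d2, K1 a w.1 * K2 b w.2 ∂μ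
      = (∫ x, K1 a x ∂ν1) * (∫ y, K2 b y ∂ν2) := fun a b => hPM (fun x => K1 a x) (fun y => K2 b y)
  have p12 : ∀ a b, ∫ w : UnitSphere d1 × UnitSphere d2, K1 a w.1 * K2 w.2 b ∂μ
      = (∫ x, K1 a x ∂ν1) * (∫ y, K2 b y ∂ν2) := fun a b =>
    (hPM (fun x => K1 a x) (fun y => K2 y b)).trans (by rw [hsy2])
  have p21 : ∀ a b, ∫ w : UnitSphere d1 × UnitSphere d2, K1 w.1 a * K2 b w.2 ∂μ
      = (∫ x, K1 a x ∂ν1) * (∫ y, K2 b y ∂ν2) := fun a b =>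
    (hPM (fun x => K1 x a) (fun y => K2 b y)).trans (by rw [hsy1])
  have p22 : ∀ a b, ∫ w : UnitSphere d1 × UnitSphere d2, K1 w.1 a * K2 w.2 b ∂μ
      = (∫ x, K1 a x ∂ν1) * (∫ y, K2 b y ∂ν2) := fun a b =>
    (hPM (fun x => K1 x a) (fun y => K2 y b)).trans (by rw [hsy1, hsy2])
  have p13 : ∀ a, ∫ w : UnitSphere d1 × UnitSphere d2, K1 a w.1 * (∫ y, K2 w.2 y ∂ν2) ∂μ
      = (∫ x, K1 a x ∂ν1) * (∫ x, ∫ y, K2 x y ∂ν2 ∂ν2) := fun a =>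
    hPM (fun x => K1 a x) (fun b => ∫ y, K2 b y ∂ν2)
  have p23 : ∀ a, ∫ w : UnitSphere d1 × UnitSphere d2, K1 w.1 a * (∫ y, K2 w.2 y ∂ν2) ∂μ
      = (∫ x, K1 a x ∂ν1) * (∫ x, ∫ y, K2 x y ∂ν2 ∂ν2) := fun a =>
    (hPM (fun x => K1 x a) (fun b => ∫ y, K2 b y ∂ν2)).trans (by rw [hsy1])
  have p31 : ∀ b, ∫ w : UnitSphere d1 × UnitSphere d2, (∫ x, K1 w.1 x ∂ν1) * K2 b w.2 ∂μ
      = (∫ x, ∫ y, K1 x y ∂ν1 ∂ν1) * (∫ y, K2 b y ∂ν2) := fun b =>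
    hPM (fun a => ∫ x, K1 a x ∂ν1) (fun y => K2 b y)
  have p32 : ∀ b, ∫ w : UnitSphere d1 × UnitSphere d2, (∫ x, K1 w.1 x ∂ν1) * K2 w.2 b ∂μ
      = (∫ x, ∫ y, K1 x y ∂ν1 ∂ν1) * (∫ y, K2 b y ∂ν2) := fun b =>
    (hPM (fun a => ∫ x, K1 a x ∂ν1) (fun y => K2 y b)).trans (by rw [hsy2])
  have p33 : ∫ w : UnitSphere d1 × UnitSphere d2, (∫ x, K1 w.1 x ∂ν1) * (∫ y, K2 w.2 y ∂ν2) ∂μ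
      = (∫ x, ∫ y, K1 x y ∂ν1 ∂ν1) * (∫ x, ∫ y, K2 x y ∂ν2 ∂ν2) :=
    hPM (fun a => ∫ x, K1 a x ∂ν1) (fun b => ∫ y, K2 b y ∂ν2)
  -- measurability and integrability
  have hselv : ∀ (i : Fin 4) (w : UnitSphere d1 × UnitSphere d2),
      Measurable fun v : UnitSphere d1 × UnitSphere d2 => (![z1, z2, w, v] : Fin 4 → _) i := by
    intro i w
    fin_cases i
    · exact measurable_const
    · exact measurable_const
    · exact measurable_const
    · exact measurable_id
  have hselp : ∀ i : Fin 4,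
      Measurable fun p : (UnitSphere d1 × UnitSphere d2) × (UnitSphere d1 × UnitSphere d2) =>
        (![z1, z2, p.1, p.2] : Fin 4 → _) i := by
    intro i
    fin_cases i
    · exact measurable_const
    · exact measurable_const
    · exact measurable_fst
    · exact measurable_snd
  have hbd : ∀ (a b : UnitSphere d1) (c d : UnitSphere d2), |K1 a b * K2 c d| ≤ C1 * C2 := by
    intro a b c d
    rw [abs_mul]
    exact mul_le_mul (hC1 a b) (hC2 c d) (abs_nonneg _) hC1nn
  have iv : ∀ (a b c d : Fin 4) (w : UnitSphere d1 × UnitSphere d2),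
      Integrable (fun v : UnitSphere d1 × UnitSphere d2 =>
        K1 (![z1, z2, w, v] a).1 (![z1, z2, w, v] b).1 *
          K2 (![z1, z2, w, v] c).2 (![z1, z2, w, v] d).2) μ := by
    intro a b c d w
    refine integrable_of_bdd ?_ (fun v => hbd _ _ _ _)
    exact ((hK1meas.comp (((hselv a w).fst).prodMk ((hselv b w).fst))).mul
      (hK2meas.comp (((hselv c w).snd).prodMk ((hselv d w).snd)))).aestronglyMeasurable
  have ivabs : ∀ (a b c d : Fin 4) (w : UnitSphere d1 × UnitSphere d2),
      |∫ v, K1 (![z1, z2, w, v] a).1 (![z1, z2, w, v] b).1 *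
          K2 (![z1, z2, w, v] c).2 (![z1, z2, w, v] d).2 ∂μ| ≤ C1 * C2 := by
    intro a b c d w
    have h := norm_integral_le_of_norm_le_const (μ := μ)
      (f := fun v : UnitSphere d1 × UnitSphere d2 =>
        K1 (![z1, z2, w, v] a).1 (![z1, z2, w, v] b).1 *
          K2 (![z1, z2, w, v] c).2 (![z1, z2, w, v] d).2)
      (C := C1 * C2) (Eventually.of_forall fun v => by
        rw [Real.norm_eq_abs]; exact hbd _ _ _ _)
    simpa [Real.norm_eq_abs] using h
  have iw : ∀ a b c d : Fin 4,
      Integrable (fun w : UnitSphere d1 × UnitSphere d2 =>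
        ∫ v, K1 (![z1, z2, w, v] a).1 (![z1, z2, w, v] b).1 *
          K2 (![z1, z2, w, v] c).2 (![z1, z2, w, v] d).2 ∂μ) μ := by
    intro a b c d
    refine integrable_of_bdd ?_ (fun w => ivabs a b c d w)
    have hj : Measurable fun p : (UnitSphere d1 × UnitSphere d2) × (UnitSphere d1 × UnitSphere d2) =>
        K1 (![z1, z2, p.1, p.2] a).1 (![z1, z2, p.1, p.2] b).1 *
          K2 (![z1, z2, p.1, p.2] c).2 (![z1, z2, p.1, p.2] d).2 :=
      (hK1meas.comp (((hselp a).fst).prodMk ((hselp b).fst))).mul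
        (hK2meas.comp (((hselp c).snd).prodMk ((hselp d).snd)))
    exact (StronglyMeasurable.integral_prod_right
      (f := fun w v => K1 (![z1, z2, w, v] a).1 (![z1, z2, w, v] b).1 *
        K2 (![z1, z2, w, v] c).2 (![z1, z2, w, v] d).2)
      hj.stronglyMeasurable).aestronglyMeasurable
  -- the key computation: expectation of a generic product term
  have QK : ∀ a b c d : Fin 4, a ≠ b → c ≠ d →
      (∫ w, ∫ v, K1 (![z1, z2, w, v] a).1 (![z1, z2, w, v] b).1 *
          K2 (![z1, z2, w, v] c).2 (![z1, z2, w, v] d).2 ∂μ ∂μ)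
        = optE K1 (fun t => ∫ x, K1 t x ∂ν1) (∫ x, ∫ y, K1 x y ∂ν1 ∂ν1)
            ((![some z1.1, some z2.1, none, none] : Fin 4 → Option _) a)
            ((![some z1.1, some z2.1, none, none] : Fin 4 → Option _) b) *
          optE K2 (fun t => ∫ y, K2 t y ∂ν2) (∫ x, ∫ y, K2 x y ∂ν2 ∂ν2)
            ((![some z1.2, some z2.2, none, none] : Fin 4 → Option _) c)
            ((![some z1.2, some z2.2, none, none] : Fin 4 → Option _) d) := by
    intro a b c d hab hcd
    fin_cases a <;> fin_cases b <;> fin_cases c <;> fin_cases d <;>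
      first
        | exact absurd rfl hab
        | exact absurd rfl hcd
        | (simp [i1a, i1b, i2a, i2b, iE1, iE2, p11, p12, p21, p22, p13, p23, p31, p32, p33,
            integral_const_mul, integral_mul_const, integral_const, optE];
           try ring)
  
  have hne : ∀ (σ : Equiv.Perm (Fin 4)) (i j : Fin 4), i ≠ j → σ i ≠ σ j :=
    fun σ i j h e => h (σ.injective e)
  have hsplitv : ∀ (σ : Equiv.Perm (Fin 4)) (w : UnitSphere d1 × UnitSphere d2),
      ∫ v, PhiKer K1 K2 (![z1, z2, w, v] (σ 0)) (![z1, z2, w, v] (σ 1))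
          (![z1, z2, w, v] (σ 2)) (![z1, z2, w, v] (σ 3)) ∂μ
        = (∫ v, K1 (![z1, z2, w, v] (σ 0)).1 (![z1, z2, w, v] (σ 1)).1 *
              K2 (![z1, z2, w, v] (σ 0)).2 (![z1, z2, w, v] (σ 1)).2 ∂μ)
          + (∫ v, K1 (![z1, z2, w, v] (σ 0)).1 (![z1, z2, w, v] (σ 1)).1 *
              K2 (![z1, z2, w, v] (σ 2)).2 (![z1, z2, w, v] (σ 3)).2 ∂μ)
          - 2 * (∫ v, K1 (![z1, z2, w, v] (σ 0)).1 (![z1, z2, w, v] (σ 1)).1 *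
              K2 (![z1, z2, w, v] (σ 0)).2 (![z1, z2, w, v] (σ 2)).2 ∂μ) := by
    intro σ w
    simp only [PhiKer]
    exact int_split (iv _ _ _ _ w) (iv _ _ _ _ w) (iv _ _ _ _ w)
  have hterm : ∀ σ : Equiv.Perm (Fin 4),
      (∫ w, ((∫ v, K1 (![z1, z2, w, v] (σ 0)).1 (![z1, z2, w, v] (σ 1)).1 *
              K2 (![z1, z2, w, v] (σ 0)).2 (![z1, z2, w, v] (σ 1)).2 ∂μ)
          + (∫ v, K1 (![z1, z2, w, v] (σ 0)).1 (![z1, z2, w, v] (σ 1)).1 *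
              K2 (![z1, z2, w, v] (σ 2)).2 (![z1, z2, w, v] (σ 3)).2 ∂μ)
          - 2 * (∫ v, K1 (![z1, z2, w, v] (σ 0)).1 (![z1, z2, w, v] (σ 1)).1 *
              K2 (![z1, z2, w, v] (σ 0)).2 (![z1, z2, w, v] (σ 2)).2 ∂μ)) ∂μ)
        = (fun i j k l =>
            optE K1 (fun t => ∫ x, K1 t x ∂ν1) (∫ x, ∫ y, K1 x y ∂ν1 ∂ν1)
              ((![some z1.1, some z2.1, none, none] : Fin 4 → Option _) i)
              ((![some z1.1, some z2.1, none, none] : Fin 4 → Option _) j) *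
            optE K2 (fun t => ∫ y, K2 t y ∂ν2) (∫ x, ∫ y, K2 x y ∂ν2 ∂ν2)
              ((![some z1.2, some z2.2, none, none] : Fin 4 → Option _) i)
              ((![some z1.2, some z2.2, none, none] : Fin 4 → Option _) j)
            + optE K1 (fun t => ∫ x, K1 t x ∂ν1) (∫ x, ∫ y, K1 x y ∂ν1 ∂ν1)
              ((![some z1.1, some z2.1, none, none] : Fin 4 → Option _) i)
              ((![some z1.1, some z2.1, none, none] : Fin 4 → Option _) j) *
            optE K2 (fun t => ∫ y, K2 t y ∂ν2) (∫ x, ∫ y, K2 x y ∂ν2 ∂ν2)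
              ((![some z1.2, some z2.2, none, none] : Fin 4 → Option _) k)
              ((![some z1.2, some z2.2, none, none] : Fin 4 → Option _) l)
            - 2 * (optE K1 (fun t => ∫ x, K1 t x ∂ν1) (∫ x, ∫ y, K1 x y ∂ν1 ∂ν1)
              ((![some z1.1, some z2.1, none, none] : Fin 4 → Option _) i)
              ((![some z1.1, some z2.1, none, none] : Fin 4 → Option _) j) *
            optE K2 (fun t => ∫ y, K2 t y ∂ν2) (∫ x, ∫ y, K2 x y ∂ν2 ∂ν2)
              ((![some z1.2, some z2.2, none, none] : Fin 4 → Option _) i)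
              ((![some z1.2, some z2.2, none, none] : Fin 4 → Option _) k)))
          (σ 0) (σ 1) (σ 2) (σ 3) := by
    intro σ
    simp only
    rw [int_split (iw _ _ _ _) (iw _ _ _ _) (iw _ _ _ _),
      QK _ _ _ _ (hne σ 0 1 (by decide)) (hne σ 0 1 (by decide)),
      QK _ _ _ _ (hne σ 0 1 (by decide)) (hne σ 2 3 (by decide)),
      QK _ _ _ _ (hne σ 0 1 (by decide)) (hne σ 0 2 (by decide))]
  have hPhiInt_v : ∀ (σ : Equiv.Perm (Fin 4)) (w : UnitSphere d1 × UnitSphere d2),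
      Integrable (fun v : UnitSphere d1 × UnitSphere d2 => PhiKer K1 K2
        (![z1, z2, w, v] (σ 0)) (![z1, z2, w, v] (σ 1))
        (![z1, z2, w, v] (σ 2)) (![z1, z2, w, v] (σ 3))) μ := by
    intro σ w
    simp only [PhiKer]
    exact ((iv _ _ _ _ w).add (iv _ _ _ _ w)).sub ((iv _ _ _ _ w).const_mul 2)
  have hinner : ∀ w : UnitSphere d1 × UnitSphere d2,
      ∫ v, PhiSym K1 K2 ![z1, z2, w, v] ∂μ
        = (1 / 24 : ℝ) * ∑ σ : Equiv.Perm (Fin 4), ∫ v, PhiKer K1 K2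
            (![z1, z2, w, v] (σ 0)) (![z1, z2, w, v] (σ 1))
            (![z1, z2, w, v] (σ 2)) (![z1, z2, w, v] (σ 3)) ∂μ := by
    intro w
    simp only [PhiSym]
    rw [integral_const_mul, integral_finset_sum _ (fun σ _ => hPhiInt_v σ w)]
  -- main computation
  rw [phi2]
  simp only [hinner, hsplitv]
  have houter : ∫ w, (∑ σ : Equiv.Perm (Fin 4), ((∫ v, K1 (![z1, z2, w, v] (σ 0)).1 (![z1, z2, w, v] (σ 1)).1 *
              K2 (![z1, z2, w, v] (σ 0)).2 (![z1, z2, w, v] (σ 1)).2 ∂μ)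
          + (∫ v, K1 (![z1, z2, w, v] (σ 0)).1 (![z1, z2, w, v] (σ 1)).1 *
              K2 (![z1, z2, w, v] (σ 2)).2 (![z1, z2, w, v] (σ 3)).2 ∂μ)
          - 2 * (∫ v, K1 (![z1, z2, w, v] (σ 0)).1 (![z1, z2, w, v] (σ 1)).1 *
              K2 (![z1, z2, w, v] (σ 0)).2 (![z1, z2, w, v] (σ 2)).2 ∂μ))) ∂μ
      = ∑ σ : Equiv.Perm (Fin 4), ∫ w, ((∫ v, K1 (![z1, z2, w, v] (σ 0)).1 (![z1, z2, w, v] (σ 1)).1 *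
              K2 (![z1, z2, w, v] (σ 0)).2 (![z1, z2, w, v] (σ 1)).2 ∂μ)
          + (∫ v, K1 (![z1, z2, w, v] (σ 0)).1 (![z1, z2, w, v] (σ 1)).1 *
              K2 (![z1, z2, w, v] (σ 2)).2 (![z1, z2, w, v] (σ 3)).2 ∂μ)
          - 2 * (∫ v, K1 (![z1, z2, w, v] (σ 0)).1 (![z1, z2, w, v] (σ 1)).1 *
              K2 (![z1, z2, w, v] (σ 0)).2 (![z1, z2, w, v] (σ 2)).2 ∂μ)) ∂μ :=
    integral_finset_sum _ (fun σ _ => ((iw _ _ _ _).add (iw _ _ _ _)).sub ((iw _ _ _ _).const_mul 2))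
  rw [integral_const_mul, houter]
  simp only [hterm]
  rw [sum_perm_fin4 (f := (fun i j k l =>
            optE K1 (fun t => ∫ x, K1 t x ∂ν1) (∫ x, ∫ y, K1 x y ∂ν1 ∂ν1)
              ((![some z1.1, some z2.1, none, none] : Fin 4 → Option _) i)
              ((![some z1.1, some z2.1, none, none] : Fin 4 → Option _) j) *
            optE K2 (fun t => ∫ y, K2 t y ∂ν2) (∫ x, ∫ y, K2 x y ∂ν2 ∂ν2)
              ((![some z1.2, some z2.2, none, none] : Fin 4 → Option _) i)
              ((![some z1.2, some z2.2, none, none] : Fin 4 → Option _) j)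
            + optE K1 (fun t => ∫ x, K1 t x ∂ν1) (∫ x, ∫ y, K1 x y ∂ν1 ∂ν1)
              ((![some z1.1, some z2.1, none, none] : Fin 4 → Option _) i)
              ((![some z1.1, some z2.1, none, none] : Fin 4 → Option _) j) *
            optE K2 (fun t => ∫ y, K2 t y ∂ν2) (∫ x, ∫ y, K2 x y ∂ν2 ∂ν2)
              ((![some z1.2, some z2.2, none, none] : Fin 4 → Option _) k)
              ((![some z1.2, some z2.2, none, none] : Fin 4 → Option _) l)
            - 2 * (optE K1 (fun t => ∫ x, K1 t x ∂ν1) (∫ x, ∫ y, K1 x y ∂ν1 ∂ν1)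
              ((![some z1.1, some z2.1, none, none] : Fin 4 → Option _) i)
              ((![some z1.1, some z2.1, none, none] : Fin 4 → Option _) j) *
            optE K2 (fun t => ∫ y, K2 t y ∂ν2) (∫ x, ∫ y, K2 x y ∂ν2 ∂ν2)
              ((![some z1.2, some z2.2, none, none] : Fin 4 → Option _) i)
              ((![some z1.2, some z2.2, none, none] : Fin 4 → Option _) k))))]
  simp only [Matrix.cons_val_zero, Matrix.cons_val_one, Matrix.head_cons,
    Matrix.cons_val_two, Matrix.tail_cons, Matrix.cons_val_three, Matrix.cons_val_fin_one,
    optE, i1a, i1b, i2a, i2b, iE1, iE2]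
  simp only [hK1symm z2.1 z1.1, hK2symm z2.2 z1.2]
  ring
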